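/- Let y, γ ∈ ℝ, v > 0, β > 0, and define α(o) = log(exp(o) + 1) + 1. Let L(o) = (1/2)·log(π/v) − α(o)·log(Ω) + (α(o) + 1/2)·log((y − γ)²·v + Ω) + log(Real.Gamma(α(o))) − log(Real.Gamma(α(o) + 1/2)), where Ω = 2β(1 + v). Then the derivative of L tends to 0 as o → −∞, i.e., Tendsto (deriv L) atBot (nhds 0). -/

import Mathlib

open Real Filter

/-- SoftPlus activation plus one. -/
noncomputable def softplusAlpha (o : ℝ) : ℝ := Real.log (Real.exp o + 1) + 1

/-!
By the chain rule the derivative of `L = F ∘ α` is `F'(α o) · eᵒ / (eᵒ + 1)`. The loss `F`, as a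
function of `α`, is `C¹` on `(0, ∞)` because the real Gamma function is the restriction of the
holomorphic complex one; since `α o → 1`, the first factor tends to `F'(1)`, while the second
tends to `0`.
-/

open Topology

theorem ContDiffAt.continuousAt_deriv {𝕜 F : Type*} [NontriviallyNormedField 𝕜]
    [NormedAddCommGroup F] [NormedSpace 𝕜 F] {f : 𝕜 → F} {x : 𝕜} {n : WithTop ℕ∞}
    (hf : ContDiffAt 𝕜 n f x) (hn : n ≠ 0) : ContinuousAt (deriv f) x :=
  (hf.continuousAt_fderiv hn).clm_apply continuousAt_const

theorem Complex.analyticAt_Gamma {s : ℂ} (hs : 0 < s.re) : AnalyticAt ℂ Gamma s := by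
  rw [Complex.analyticAt_iff_eventually_differentiableAt]
  filter_upwards [(isOpen_lt continuous_const continuous_re).mem_nhds hs] with z hz
  refine differentiableAt_Gamma z fun m hm => ?_
  have : (0 : ℝ) < (-(m : ℂ)).re := hm ▸ hz
  simp only [neg_re, natCast_re, Left.neg_pos_iff] at this
  exact (Nat.cast_nonneg m).not_gt this

theorem Real.contDiffAt_Gamma {x : ℝ} (hx : 0 < x) {n : WithTop ℕ∞} :
    ContDiffAt ℝ n Gamma x := by
  have := ((Complex.analyticAt_Gamma (s := x) (by simpa)).contDiffAt (n := n)).real_of_complex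
  simpa only [Complex.Gamma_ofReal, Complex.ofReal_re] using this

theorem Real.contDiffAt_log_Gamma {x : ℝ} (hx : 0 < x) {n : WithTop ℕ∞} :
    ContDiffAt ℝ n (fun x => log (Gamma x)) x :=
  (contDiffAt_Gamma hx).log (Gamma_pos_of_pos hx).ne'

theorem one_le_softplusAlpha (o : ℝ) : 1 ≤ softplusAlpha o := by
  have : 0 ≤ log (exp o + 1) := log_nonneg (by linarith [exp_pos o])
  unfold softplusAlpha
  linarith

theorem hasDerivAt_softplusAlpha (o : ℝ) :
    HasDerivAt softplusAlpha (exp o / (exp o + 1)) o :=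
  (((hasDerivAt_exp o).add_const 1).log (by positivity)).add_const 1

theorem tendsto_exp_add_one_atBot : Tendsto (fun o => exp o + 1) atBot (𝓝 1) := by
  simpa using tendsto_exp_atBot.add_const 1

theorem tendsto_softplusAlpha_atBot : Tendsto softplusAlpha atBot (𝓝 1) := by
  have := ((continuousAt_log one_ne_zero).tendsto.comp tendsto_exp_add_one_atBot).add_const 1
  rwa [log_one, zero_add] at this

theorem tendsto_exp_div_exp_add_one_atBot :
    Tendsto (fun o => exp o / (exp o + 1)) atBot (𝓝 0) := by
  have := tendsto_exp_atBot.div tendsto_exp_add_one_atBot one_ne_zero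
  rwa [zero_div] at this

theorem tendsto_deriv_comp_softplusAlpha_atBot {F : ℝ → ℝ}
    (hF : ∀ x, 1 ≤ x → ContDiffAt ℝ 1 F x) :
    Tendsto (deriv fun o => F (softplusAlpha o)) atBot (𝓝 0) := by
  have hchain (o : ℝ) : deriv (fun o => F (softplusAlpha o)) o =
      deriv F (softplusAlpha o) * (exp o / (exp o + 1)) :=
    (((hF _ (one_le_softplusAlpha o)).differentiableAt one_ne_zero).hasDerivAt.comp o
      (hasDerivAt_softplusAlpha o)).deriv
  have hF' : Tendsto (fun o => deriv F (softplusAlpha o)) atBot (𝓝 (deriv F 1)) :=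
    ((hF 1 le_rfl).continuousAt_deriv one_ne_zero).tendsto.comp tendsto_softplusAlpha_atBot
  have := hF'.mul tendsto_exp_div_exp_add_one_atBot
  rw [mul_zero] at this
  exact this.congr fun o => (hchain o).symm

noncomputable def nigNLL (y γ v β α : ℝ) : ℝ :=
  (1 / 2) * log (π / v) - α * log (2 * β * (1 + v))
    + (α + 1 / 2) * log ((y - γ) ^ 2 * v + 2 * β * (1 + v))
    + log (Gamma α) - log (Gamma (α + 1 / 2))

theorem contDiffAt_nigNLL (y γ v β : ℝ) {α : ℝ} (hα : 0 < α) {n : WithTop ℕ∞} :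
    ContDiffAt ℝ n (nigNLL y γ v β) α :=
  (((contDiffAt_const.sub (contDiffAt_id.mul contDiffAt_const)).add
    ((contDiffAt_id.add contDiffAt_const).mul contDiffAt_const)).add
    (contDiffAt_log_Gamma hα)).sub
    ((contDiffAt_log_Gamma (by linarith)).comp α (contDiffAt_id.add contDiffAt_const))

theorem stmt_1_general (y γ v β : ℝ) :
    Tendsto
      (deriv (fun o : ℝ =>
        (1 / 2) * Real.log (Real.pi / v)
          - softplusAlpha o * Real.log (2 * β * (1 + v))
          + (softplusAlpha o + 1 / 2) * Real.log ((y - γ) ^ 2 * v + 2 * β * (1 + v))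
          + Real.log (Real.Gamma (softplusAlpha o))
          - Real.log (Real.Gamma (softplusAlpha o + 1 / 2))))
      atBot (nhds 0) :=
  tendsto_deriv_comp_softplusAlpha_atBot fun _ hα =>
    contDiffAt_nigNLL y γ v β (zero_lt_one.trans_le hα)

theorem stmt_1 (y γ v β : ℝ) (hv : 0 < v) (hβ : 0 < β) :
    Tendsto
      (deriv (fun o : ℝ =>
        (1 / 2) * Real.log (Real.pi / v)
          - softplusAlpha o * Real.log (2 * β * (1 + v))
          + (softplusAlpha o + 1 / 2) * Real.log ((y - γ) ^ 2 * v + 2 * β * (1 + v))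
          + Real.log (Real.Gamma (softplusAlpha o))
          - Real.log (Real.Gamma (softplusAlpha o + 1 / 2))))
      atBot (nhds 0) :=
  stmt_1_general y γ v β
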